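/- arXiv:2407.02033 — 2 statements merged into one kernel-verified Lean document; each statement's English description precedes it below -/
import Mathlib

section
/- Let I be a set, let f : ℕ → I be a surjection all of whose fibers are infinite, and for each i ∈ I let B i be a set and g i : ℕ → B i a surjection all of whose fibers are infinite. Define h : ℕ → ⋃ i, B i by h(n) = g (f n) (m), where m is the cardinality of {k < n : f k = f n}. Then h is a surjection onto ⋃ i, B i and every fiber of h is infinite. -/
/-!
The `m`-th element of the fiber `f⁻¹ {i}` is sent by `h` to `g i m`, because exactly `m` earlier
indices lie in the same fiber. So `h` restricted to that fiber is a reindexing of `g i`, and both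
surjectivity onto `B i` and infiniteness of the fibers of `g i` transfer to `h`.
-/

theorem Nat.ncard_setOf_lt_and (p : ℕ → Prop) [DecidablePred p] (n : ℕ) :
    {k | k < n ∧ p k}.ncard = Nat.count p n := by
  rw [Nat.count_eq_card_filter_range, ← Set.ncard_coe_finset]
  congr
  ext k
  simp

section Interleave

variable {I X : Type*} {f : ℕ → I} {g : I → ℕ → X} {h : ℕ → X}

theorem apply_nth_fiber_eq_of_interleave
    (hh : ∀ n, h n = g (f n) ({k : ℕ | k < n ∧ f k = f n}.ncard))
    {i : I} (hfi : {n | f n = i}.Infinite) (m : ℕ) :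
    h (Nat.nth (f · = i) m) = g i m := by
  classical
  have hfn : f (Nat.nth (f · = i) m) = i := Nat.nth_mem_of_infinite hfi m
  rw [hh, hfn, Nat.ncard_setOf_lt_and, Nat.count_nth_of_infinite hfi]

theorem infinite_fiber_of_interleave
    (hh : ∀ n, h n = g (f n) ({k : ℕ | k < n ∧ f k = f n}.ncard))
    {i : I} (hfi : {n | f n = i}.Infinite) {x : X} (hgx : {m | g i m = x}.Infinite) :
    {n | h n = x}.Infinite := by
  refine ((hgx.image (Nat.nth_injective hfi).injOn)).mono ?_
  rintro _ ⟨m, hm, rfl⟩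
  exact (apply_nth_fiber_eq_of_interleave hh hfi m).trans hm

end Interleave

theorem stmt_0_general {I X : Type*} (f : ℕ → I)
    (hffib : ∀ i, {n : ℕ | f n = i}.Infinite)
    (B : I → Set X) (g : ∀ i : I, ℕ → X)
    (hg : ∀ i, Set.range (g i) = B i)
    (hgfib : ∀ i, ∀ x ∈ B i, {n : ℕ | g i n = x}.Infinite)
    (h : ℕ → X)
    (hh : ∀ n, h n = g (f n) ({k : ℕ | k < n ∧ f k = f n}.ncard)) :
    Set.range h = ⋃ i, B i ∧ ∀ x ∈ ⋃ i, B i, {n : ℕ | h n = x}.Infinite := by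
  refine ⟨Set.Subset.antisymm ?_ ?_, ?_⟩
  · rintro _ ⟨n, rfl⟩
    exact Set.mem_iUnion.2 ⟨f n, hh n ▸ hg (f n) ▸ Set.mem_range_self _⟩
  · simp only [Set.iUnion_subset_iff, ← hg]
    rintro i _ ⟨m, rfl⟩
    exact ⟨_, apply_nth_fiber_eq_of_interleave hh (hffib i) m⟩
  · intro x hx
    obtain ⟨i, hxi⟩ := Set.mem_iUnion.1 hx
    exact infinite_fiber_of_interleave hh (hffib i) (hgfib i x hxi)

/-- interleaving a family of infinite-to-one surjections onto sets `B i`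
along an infinite-to-one surjective index function `f` yields an infinite-to-one
surjection onto the union `⋃ i, B i`. -/
theorem stmt_0 {I X : Type*} (f : ℕ → I) (hf : Function.Surjective f)
    (hffib : ∀ i, {n : ℕ | f n = i}.Infinite)
    (B : I → Set X) (g : ∀ i : I, ℕ → X)
    (hg : ∀ i, Set.range (g i) = B i)
    (hgfib : ∀ i, ∀ x ∈ B i, {n : ℕ | g i n = x}.Infinite)
    (h : ℕ → X)
    (hh : ∀ n, h n = g (f n) ({k : ℕ | k < n ∧ f k = f n}.ncard)) :
    Set.range h = ⋃ i, B i ∧ ∀ x ∈ ⋃ i, B i, {n : ℕ | h n = x}.Infinite :=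
  stmt_0_general f hffib B g hg hgfib h hh
end

section
/- Let P be a poset, S a group of order automorphisms of P, 𝓕 a filter of subgroups of S such that for every p ∈ P the stabilizer S_p = {g ∈ S : g(p) = p} belongs to 𝓕. Let G ⊆ P be a filter that is symmetrically generic: for every dense open D ⊆ P and every X ∈ 𝓕, (X·D) ∩ G ≠ ∅, where X·D = {g(d) : g ∈ X, d ∈ D}. Then for every dense open D ⊆ P and every pair (g, X) with g ∈ S and X ∈ 𝓕, there exist r ∈ X and d ∈ D such that r(g(d)) ∈ G; consequently the pair (r·g, X ∩ S_{r(g(d))}) extends (g, X) in the shuffling poset and 'forces' the shuffled filter to meet D. -/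
/-! Each `g : S` acts as an order automorphism of `P`, so `g • D` is again dense and open;
symmetric genericity applied to `g • D` and `X` yields the witnesses. -/

theorem IsCoinitial.image_orderIso {α β : Type*} [LE α] [LE β] {s : Set α}
    (hs : IsCoinitial s) (f : α ≃o β) : IsCoinitial (f '' s) := fun b ↦ by
  obtain ⟨a, ha, hab⟩ := hs (f.symm b)
  exact ⟨f a, Set.mem_image_of_mem f ha, f.le_symm_apply.mp hab⟩

def smulOrderIso {P S : Type*} [LE P] [Group S] [MulAction S P]
    (hact : ∀ (g : S) (p q : P), p ≤ q ↔ g • p ≤ g • q) (g : S) : P ≃o P where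
  toEquiv := MulAction.toPerm g
  map_rel_iff' := (hact g _ _).symm

theorem stmt_12_general {P S : Type*} [PartialOrder P] [Group S] [MulAction S P]
    (hact : ∀ (g : S) (p q : P), p ≤ q ↔ g • p ≤ g • q)
    (𝓕 : Set (Subgroup S))
    (G : Set P)
    (hsym : ∀ D : Set P,
      (∀ p : P, ∃ d ∈ D, d ≤ p) →
      (∀ d ∈ D, ∀ q : P, q ≤ d → q ∈ D) →
      ∀ X ∈ 𝓕, ∃ s ∈ X, ∃ d ∈ D, s • d ∈ G) :
    ∀ D : Set P,
      (∀ p : P, ∃ d ∈ D, d ≤ p) →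
      (∀ d ∈ D, ∀ q : P, q ≤ d → q ∈ D) →
      ∀ (g : S), ∀ X ∈ 𝓕, ∃ r ∈ X, ∃ d ∈ D, r • (g • d) ∈ G := by
  intro D hdense hopen g X hX
  let e := smulOrderIso hact g
  have hlower : IsLowerSet D := fun _ _ hle hmem ↦ hopen _ hmem _ hle
  obtain ⟨r, hr, _, ⟨d, hd, rfl⟩, hG⟩ :=
    hsym (e '' D) (IsCoinitial.image_orderIso hdense e)
      (fun _ hmem _ hle ↦ hlower.image e hle hmem) X hX
  exact ⟨r, hr, d, hd, hG⟩

/-- the density argument of the Shuffling Lemma. If `S` acts on the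
poset `P` by order automorphisms, every stabilizer belongs to the subgroup filter
`𝓕`, and `G` is a symmetrically generic filter (it meets `X·D` for every dense open
`D` and every `X ∈ 𝓕`), then for every dense open `D` and every pair `(g, X)` with
`g ∈ S`, `X ∈ 𝓕`, there are `r ∈ X` and `d ∈ D` with `r • (g • d) ∈ G`. -/
theorem stmt_12 {P S : Type*} [PartialOrder P] [Group S] [MulAction S P]
    (hact : ∀ (g : S) (p q : P), p ≤ q ↔ g • p ≤ g • q)
    (𝓕 : Set (Subgroup S))
    (hstab : ∀ p : P, MulAction.stabilizer S p ∈ 𝓕)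
    (G : Set P)
    (hGup : ∀ p ∈ G, ∀ q : P, p ≤ q → q ∈ G)
    (hGdir : ∀ p ∈ G, ∀ q ∈ G, ∃ r ∈ G, r ≤ p ∧ r ≤ q)
    (hsym : ∀ D : Set P,
      (∀ p : P, ∃ d ∈ D, d ≤ p) →
      (∀ d ∈ D, ∀ q : P, q ≤ d → q ∈ D) →
      ∀ X ∈ 𝓕, ∃ s ∈ X, ∃ d ∈ D, s • d ∈ G) :
    ∀ D : Set P,
      (∀ p : P, ∃ d ∈ D, d ≤ p) →
      (∀ d ∈ D, ∀ q : P, q ≤ d → q ∈ D) →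
      ∀ (g : S), ∀ X ∈ 𝓕, ∃ r ∈ X, ∃ d ∈ D, r • (g • d) ∈ G :=
  stmt_12_general hact 𝓕 G hsym
end
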